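/- arXiv:2308.13696 — 5 statements merged into one kernel-verified Lean document; each statement's English description precedes it below -/
import Mathlib

section
/- Lookahead Beam Search with lookahead depth at least the maximum length recovers exhaustive (MAP) search: fix n ≥ 1 and k ≥ 1, let Y_0 = {[]} (the singleton containing the empty hypothesis), and for each t = 1, …, n let Y_t be any top-k selection of the candidate set B_t = {y ++ [v] : y ∈ Y_{t−1}, v ∈ V} under the objective y ↦ f_{n−t}(y). Then max_{y ∈ Y_n} s(y) = max_{z ∈ V^n} s(z); that is, the decoder outputs a highest-score complete hypothesis of length n. -/
open scoped Classical

/-- The `d`-step lookahead score: the maximum of the score `s (y ++ w)` over all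
continuations `w` of length `d` (encoded as functions `Fin d → V`). -/
noncomputable def lookahead {V : Type*} [Fintype V] [Nonempty V]
    (s : List V → ℝ) (d : ℕ) (y : List V) : ℝ :=
  Finset.univ.sup' Finset.univ_nonempty (fun w : Fin d → V => s (y ++ List.ofFn w))

/-- `S` is a top-`k` selection of the finite set `A` under the objective `g`. -/
def IsTopK {α : Type*} [DecidableEq α] (A : Finset α) (g : α → ℝ) (k : ℕ)
    (S : Finset α) : Prop :=
  S ⊆ A ∧ S.card = min k A.card ∧ ∀ x ∈ S, ∀ z ∈ A \ S, g z ≤ g x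

/-- The maximum score over all complete hypotheses of length `n`
(encoded as functions `Fin n → V`). -/
noncomputable def globalMax {V : Type*} [Fintype V] [Nonempty V]
    (s : List V → ℝ) (n : ℕ) : ℝ :=
  Finset.univ.sup' Finset.univ_nonempty (fun w : Fin n → V => s (List.ofFn w))

lemma lookahead_zero {V : Type*} [Fintype V] [Nonempty V] (s : List V → ℝ) (y : List V) :
    lookahead s 0 y = s y := by
  unfold lookahead
  simp [List.ofFn_zero]

lemma le_globalMax {V : Type*} [Fintype V] [Nonempty V] (s : List V → ℝ) {n : ℕ}
    {l : List V} (h : l.length = n) : s l ≤ globalMax s n := by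
  subst h
  have := Finset.le_sup' (fun w : Fin l.length → V => s (List.ofFn w)) (Finset.mem_univ l.get)
  rw [List.ofFn_get] at this
  exact this

lemma lookahead_succ_exists {V : Type*} [Fintype V] [Nonempty V] (s : List V → ℝ)
    (d : ℕ) (y : List V) : ∃ v : V, lookahead s (d + 1) y ≤ lookahead s d (y ++ [v]) := by
  obtain ⟨w, -, hw⟩ := Finset.exists_mem_eq_sup' (Finset.univ_nonempty)
    (fun w : Fin (d + 1) → V => s (y ++ List.ofFn w))
  refine ⟨w 0, ?_⟩
  rw [lookahead, hw]
  have h1 : y ++ List.ofFn w = (y ++ [w 0]) ++ List.ofFn (fun i : Fin d => w i.succ) := by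
    rw [List.ofFn_succ]
    simp
  rw [h1]
  exact Finset.le_sup' (fun w' : Fin d → V => s ((y ++ [w 0]) ++ List.ofFn w'))
    (Finset.mem_univ (fun i : Fin d => w i.succ))

/-- Lookahead Beam Search with lookahead depth at least the maximum length
recovers exhaustive (MAP) search: if at every step `t = 1, …, n` the beam `Y t` is
a top-`k` selection of the one-token extensions of `Y (t-1)` under the objective
`f_{n-t}`, then the best score in the final beam equals the global optimum over
all hypotheses of length `n`. -/
theorem lookahead_full_depth_recovers_exhaustive_search
    {V : Type*} [Fintype V] [Nonempty V] [DecidableEq V]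
    (ℓ : List V → V → ℝ) (s : List V → ℝ)
    (hs0 : s [] = 0) (hrec : ∀ (y : List V) (v : V), s (y ++ [v]) = s y + ℓ y v)
    (n k : ℕ) (hn : 1 ≤ n) (hk : 1 ≤ k)
    (Y : ℕ → Finset (List V))
    (hY0 : Y 0 = {([] : List V)})
    (hYt : ∀ t : ℕ, 1 ≤ t → t ≤ n →
      IsTopK
        (Finset.image (fun p : List V × V => p.1 ++ [p.2])
          ((Y (t - 1)) ×ˢ (Finset.univ : Finset V)))
        (lookahead s (n - t)) k (Y t))
    (hYne : (Y n).Nonempty) :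
    (Y n).sup' hYne s = globalMax s n := by
  set M := globalMax s n with hM
  -- Invariant: every element of `Y t` has length `t`, and some element of `Y t`
  -- has lookahead score at least `M`.
  have key : ∀ t : ℕ, t ≤ n →
      (∀ y ∈ Y t, y.length = t) ∧ (∃ y ∈ Y t, M ≤ lookahead s (n - t) y) := by
    intro t
    induction t with
    | zero =>
      intro _
      constructor
      · intro y hy
        rw [hY0] at hy
        simp at hy
        simp [hy]
      · refine ⟨[], by simp [hY0], ?_⟩
        simp only [Nat.sub_zero]
        unfold lookahead globalMax at *
        simp [hM]
    | succ t ih =>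
      intro ht
      have ht' : t ≤ n := Nat.le_of_succ_le ht
      obtain ⟨hlen, y₀, hy₀, hy₀M⟩ := ih ht'
      obtain ⟨hsub, hcard, htop⟩ := hYt (t + 1) (Nat.succ_le_succ (Nat.zero_le t)) ht
      simp only [Nat.add_sub_cancel] at hsub hcard htop
      set A := Finset.image (fun p : List V × V => p.1 ++ [p.2])
        ((Y t) ×ˢ (Finset.univ : Finset V)) with hA
      -- lengths
      have hlen' : ∀ y ∈ Y (t + 1), y.length = t + 1 := by
        intro y hy
        have := hsub hy
        rw [hA] at this
        obtain ⟨p, hp, rfl⟩ := Finset.mem_image.mp this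
        have hp1 : p.1 ∈ Y t := (Finset.mem_product.mp hp).1
        simp [hlen p.1 hp1]
      refine ⟨hlen', ?_⟩
      -- the good candidate
      have hd : n - t = (n - (t + 1)) + 1 := by omega
      rw [hd] at hy₀M
      obtain ⟨v, hv⟩ := lookahead_succ_exists s (n - (t + 1)) y₀
      have hMcand : M ≤ lookahead s (n - (t + 1)) (y₀ ++ [v]) := le_trans hy₀M hv
      have hcandA : y₀ ++ [v] ∈ A := by
        rw [hA]
        exact Finset.mem_image.mpr ⟨(y₀, v), Finset.mem_product.mpr ⟨hy₀, Finset.mem_univ v⟩, rfl⟩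
      have hAne : A.Nonempty := ⟨_, hcandA⟩
      have hScard : 0 < (Y (t + 1)).card := by
        rw [hcard]
        exact lt_min hk (Finset.card_pos.mpr hAne)
      obtain ⟨x, hx⟩ := Finset.card_pos.mp hScard
      by_cases hmem : y₀ ++ [v] ∈ Y (t + 1)
      · exact ⟨y₀ ++ [v], hmem, hMcand⟩
      · have : y₀ ++ [v] ∈ A \ Y (t + 1) := Finset.mem_sdiff.mpr ⟨hcandA, hmem⟩
        exact ⟨x, hx, le_trans hMcand (htop x hx _ this)⟩
  obtain ⟨hlenn, y, hy, hyM⟩ := key n le_rfl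
  rw [Nat.sub_self, lookahead_zero] at hyM
  apply le_antisymm
  · exact Finset.sup'_le hYne s fun z hz => le_globalMax s (hlenn z hz)
  · exact le_trans hyM (Finset.le_sup' s hy)
end

section
/- Invariant of full-depth Lookahead Beam Search: fix n ≥ 1 and k ≥ 1, let Y_0 = {[]}, and for each t = 1, …, n let Y_t be any top-k selection of the candidate set B_t = {y ++ [v] : y ∈ Y_{t−1}, v ∈ V} under the objective y ↦ f_{n−t}(y). Then for every 0 ≤ t ≤ n, max_{y ∈ Y_t} f_{n−t}(y) = max_{z ∈ V^n} s(z); i.e., at every step the beam contains a hypothesis whose full-depth lookahead score equals the global optimum. -/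
open scoped Classical

lemma topk_sup' {α : Type*} [DecidableEq α] (A : Finset α) (g : α → ℝ) (k : ℕ)
    (S : Finset α) (hTK : IsTopK A g k S) (hS : S.Nonempty) (hA : A.Nonempty) :
    S.sup' hS g = A.sup' hA g := by
  obtain ⟨hsub, _, htop⟩ := hTK
  apply le_antisymm
  · exact Finset.sup'_le _ _ fun x hx => Finset.le_sup' g (hsub hx)
  · apply Finset.sup'_le _ _ fun z hz => ?_
    by_cases hzS : z ∈ S
    · exact Finset.le_sup' g hzS
    · obtain ⟨x, hx⟩ := hS
      exact le_trans (htop x hx z (Finset.mem_sdiff.mpr ⟨hz, hzS⟩)) (Finset.le_sup' g hx)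

lemma lookahead_succ {V : Type*} [Fintype V] [Nonempty V]
    (s : List V → ℝ) (d : ℕ) (y : List V) :
    lookahead s (d + 1) y
      = Finset.univ.sup' Finset.univ_nonempty (fun v : V => lookahead s d (y ++ [v])) := by
  unfold lookahead
  apply le_antisymm
  · apply Finset.sup'_le _ _ fun w _ => ?_
    have h1 : y ++ List.ofFn w = (y ++ [w 0]) ++ List.ofFn (fun i : Fin d => w i.succ) := by
      rw [List.ofFn_succ]; simp
    have h2 : s (y ++ List.ofFn w) ≤ Finset.univ.sup' Finset.univ_nonempty
        (fun w' : Fin d → V => s ((y ++ [w 0]) ++ List.ofFn w')) := by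
      rw [h1]
      exact Finset.le_sup' (fun w' : Fin d → V => s ((y ++ [w 0]) ++ List.ofFn w'))
        (Finset.mem_univ _)
    exact h2.trans (Finset.le_sup'
      (fun v : V => Finset.univ.sup' Finset.univ_nonempty
        (fun w' : Fin d → V => s ((y ++ [v]) ++ List.ofFn w'))) (Finset.mem_univ (w 0)))
  · apply Finset.sup'_le _ _ fun v _ => ?_
    apply Finset.sup'_le _ _ fun w _ => ?_
    have h1 : (y ++ [v]) ++ List.ofFn w = y ++ List.ofFn (Fin.cons v w : Fin (d+1) → V) := by
      rw [List.ofFn_succ]; simp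
    rw [h1]
    exact Finset.le_sup' (fun w' : Fin (d+1) → V => s (y ++ List.ofFn w'))
      (Finset.mem_univ (Fin.cons v w))

/-- Invariant of full-depth Lookahead Beam Search: at every step `0 ≤ t ≤ n`,
the maximal full-depth lookahead score `f_{n-t}` over the beam `Y t` equals the
global optimum over all hypotheses of length `n`. -/
theorem lookahead_full_depth_invariant
    {V : Type*} [Fintype V] [Nonempty V] [DecidableEq V]
    (ℓ : List V → V → ℝ) (s : List V → ℝ)
    (hs0 : s [] = 0) (hrec : ∀ (y : List V) (v : V), s (y ++ [v]) = s y + ℓ y v)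
    (n k : ℕ) (hn : 1 ≤ n) (hk : 1 ≤ k)
    (Y : ℕ → Finset (List V))
    (hY0 : Y 0 = {([] : List V)})
    (hYt : ∀ t : ℕ, 1 ≤ t → t ≤ n →
      IsTopK
        (Finset.image (fun p : List V × V => p.1 ++ [p.2])
          ((Y (t - 1)) ×ˢ (Finset.univ : Finset V)))
        (lookahead s (n - t)) k (Y t))
    (hYne : ∀ t : ℕ, t ≤ n → (Y t).Nonempty) :
    ∀ (t : ℕ) (ht : t ≤ n),
      (Y t).sup' (hYne t ht) (lookahead s (n - t)) = globalMax s n := by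
  intro t
  induction t with
  | zero =>
      intro ht
      have h0 : lookahead s (n - 0) ([] : List V) = globalMax s n := by
        unfold lookahead globalMax
        simp
      have : (Y 0).sup' (hYne 0 ht) (lookahead s (n - 0)) = lookahead s (n - 0) [] := by
        simp [hY0]
      rw [this, h0]
  | succ t ih =>
      intro ht
      have ht' : t ≤ n := Nat.le_of_succ_le ht
      have hTK := hYt (t + 1) (Nat.succ_le_succ (Nat.zero_le t)) ht
      simp only [Nat.add_sub_cancel] at hTK
      have hYtne := hYne t ht'
      have hAne : (Finset.image (fun p : List V × V => p.1 ++ [p.2])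
          ((Y t) ×ˢ (Finset.univ : Finset V))).Nonempty := by
        obtain ⟨y, hy⟩ := hYtne
        exact ⟨y ++ [Classical.arbitrary V],
          Finset.mem_image.mpr ⟨(y, Classical.arbitrary V),
            Finset.mem_product.mpr ⟨hy, Finset.mem_univ _⟩, rfl⟩⟩
      rw [topk_sup' _ (lookahead s (n - (t + 1))) k (Y (t+1)) hTK (hYne (t+1) ht) hAne]
      have hstep : (Finset.image (fun p : List V × V => p.1 ++ [p.2])
            ((Y t) ×ˢ (Finset.univ : Finset V))).sup' hAne (lookahead s (n - (t + 1)))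
          = (Y t).sup' hYtne (lookahead s (n - t)) := by
        rw [Finset.sup'_image, Finset.sup'_product_left]
        apply Finset.sup'_congr _ rfl
        intro y _
        have hd : n - t = (n - (t + 1)) + 1 := by omega
        rw [hd, lookahead_succ]
        rfl
      rw [hstep, ih ht']
end

section
/- Soundness of branch-and-bound pruning: assume ℓ(y, v) ≤ 0 for every hypothesis y and token v. Then for every hypothesis y, every d ≥ 0, and every real threshold c, if s(y) < c then f_d(y) < c. Consequently, for every finite nonempty set B of hypotheses containing some y₀ with f_d(y₀) ≥ c, one has max_{y ∈ B} f_d(y) = max_{y ∈ B with s(y) ≥ c} f_d(y); i.e., pruning every prefix whose score falls below the incumbent value c does not change the computed lookahead maximum, so the branch-and-bound search finds the same value of h_d as breadth-first search. -/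
open scoped Classical

/-- Soundness of branch-and-bound pruning: if every token log-probability is
nonpositive, then `s(y) < c` implies `f_d(y) < c`; consequently, for every
finite nonempty set `B` containing a hypothesis with `f_d`-value at least `c`,
pruning the hypotheses whose score falls below `c` does not change the
maximal lookahead value over `B`. -/
theorem branch_and_bound_pruning_sound
    {V : Type*} [Fintype V] [Nonempty V]
    (ℓ : List V → V → ℝ) (s : List V → ℝ)
    (hs0 : s [] = 0) (hrec : ∀ (y : List V) (v : V), s (y ++ [v]) = s y + ℓ y v)
    (hneg : ∀ (y : List V) (v : V), ℓ y v ≤ 0) :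
    (∀ (y : List V) (d : ℕ) (c : ℝ), s y < c → lookahead s d y < c) ∧
    ∀ (B : Finset (List V)) (hB : B.Nonempty) (d : ℕ) (c : ℝ),
      (∃ y₀ ∈ B, c ≤ lookahead s d y₀) →
      (B.filter (fun y => c ≤ s y)).Nonempty ∧
      ∀ hne : (B.filter (fun y => c ≤ s y)).Nonempty,
        B.sup' hB (lookahead s d) =
          (B.filter (fun y => c ≤ s y)).sup' hne (lookahead s d) := by
  -- key: appending any list does not increase the score
  have key : ∀ (w y : List V), s (y ++ w) ≤ s y := by
    intro w
    induction w with
    | nil => intro y; simp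
    | cons a w ih =>
      intro y
      have h1 : s ((y ++ [a]) ++ w) ≤ s (y ++ [a]) := ih (y ++ [a])
      have h2 : s (y ++ [a]) ≤ s y := by
        rw [hrec]
        linarith [hneg y a]
      calc s (y ++ a :: w) = s ((y ++ [a]) ++ w) := by simp
        _ ≤ s (y ++ [a]) := h1
        _ ≤ s y := h2
  have look_le : ∀ (y : List V) (d : ℕ), lookahead s d y ≤ s y := by
    intro y d
    apply Finset.sup'_le
    intro w _
    exact key _ y
  have prune : ∀ (y : List V) (d : ℕ) (c : ℝ), s y < c → lookahead s d y < c := by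
    intro y d c h
    exact lt_of_le_of_lt (look_le y d) h
  refine ⟨prune, ?_⟩
  intro B hB d c ⟨y₀, hy₀B, hy₀⟩
  have hy₀s : c ≤ s y₀ := le_trans hy₀ (look_le y₀ d)
  have hmem : y₀ ∈ B.filter (fun y => c ≤ s y) := Finset.mem_filter.2 ⟨hy₀B, hy₀s⟩
  refine ⟨⟨y₀, hmem⟩, ?_⟩
  intro hne
  apply le_antisymm
  · apply Finset.sup'_le
    intro y hyB
    by_cases hsy : c ≤ s y
    · exact Finset.le_sup' _ (Finset.mem_filter.2 ⟨hyB, hsy⟩)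
    · have : lookahead s d y < c := prune y d c (not_le.1 hsy)
      exact le_trans (le_of_lt this) (le_trans hy₀ (Finset.le_sup' _ hmem))
  · apply Finset.sup'_le
    intro y hy
    exact Finset.le_sup' _ (Finset.mem_filter.1 hy).1
end

section
/- Soundness of early termination in Lookahead Beam Search: assume ℓ(y, v) ≤ 0 for every hypothesis y and token v. Let y¹, …, y^b be pairwise distinct hypotheses sorted in descending order of score, s(y¹) ≥ … ≥ s(y^b). Fix d ≥ 0, k ≥ 1, an index 1 ≤ i ≤ b, and θ ∈ ℝ, and suppose s(y^i) < θ while at least k of the hypotheses y¹, …, y^{i−1} satisfy f_d(y^j) ≥ θ. Then every top-k selection of {y¹, …, y^b} under the objective f_d is contained in {y¹, …, y^{i−1}}; i.e., terminating the candidate scan at index i does not change the selected beam. -/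
open scoped Classical

/-- Soundness of early termination in Lookahead Beam Search: if the hypotheses
`y 0, …, y (b-1)` are pairwise distinct and sorted in descending order of
score, `s (y i) < θ`, and at least `k` of the hypotheses before index `i`
satisfy `f_d ≥ θ`, then every top-`k` selection under `f_d` is contained in
the hypotheses before index `i`. -/
theorem early_termination_sound
    {V : Type*} [Fintype V] [Nonempty V] [DecidableEq V]
    (ℓ : List V → V → ℝ) (s : List V → ℝ)
    (hs0 : s [] = 0) (hrec : ∀ (y : List V) (v : V), s (y ++ [v]) = s y + ℓ y v)
    (hneg : ∀ (y : List V) (v : V), ℓ y v ≤ 0)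
    (b : ℕ) (y : Fin b → List V) (hinj : Function.Injective y)
    (hsort : ∀ i j : Fin b, i ≤ j → s (y j) ≤ s (y i))
    (d k : ℕ) (hk : 1 ≤ k) (i : Fin b) (θ : ℝ)
    (hi : s (y i) < θ)
    (hcount : k ≤ (Finset.univ.filter
      (fun j : Fin b => j < i ∧ θ ≤ lookahead s d (y j))).card) :
    ∀ S : Finset (List V),
      IsTopK (Finset.image y Finset.univ) (lookahead s d) k S →
      ∀ x ∈ S, ∃ j : Fin b, j < i ∧ x = y j := by
  intro S hS x hxS
  obtain ⟨hSA, hScard, hStop⟩ := hS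
  -- score is non-increasing along extensions
  have hext : ∀ (z : List V) (L : List V), s (z ++ L) ≤ s z := by
    intro z L
    induction L using List.reverseRecOn with
    | nil => simp
    | append_singleton L v ih =>
        calc s (z ++ (L ++ [v])) = s ((z ++ L) ++ [v]) := by rw [List.append_assoc]
        _ = s (z ++ L) + ℓ (z ++ L) v := hrec _ _
        _ ≤ s (z ++ L) := by linarith [hneg (z ++ L) v]
        _ ≤ s z := ih
  have hlook : ∀ z : List V, lookahead s d z ≤ s z := by
    intro z
    apply Finset.sup'_le
    intro w _
    exact hext z _
  -- the set of good indices
  set B : Finset (Fin b) := Finset.univ.filter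
      (fun j : Fin b => j < i ∧ θ ≤ lookahead s d (y j)) with hB
  set A : Finset (List V) := Finset.image y Finset.univ with hA
  have hAcard : A.card = b := by
    rw [hA, Finset.card_image_of_injective _ hinj, Finset.card_fin]
  have hBA : Finset.image y B ⊆ A := by
    intro z hz
    obtain ⟨j, _, rfl⟩ := Finset.mem_image.mp hz
    exact Finset.mem_image.mpr ⟨j, Finset.mem_univ j, rfl⟩
  have hBcard : k ≤ (Finset.image y B).card := by
    rwa [Finset.card_image_of_injective _ hinj]
  have hkb : k ≤ b := by have := Finset.card_le_card hBA; omega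
  have hScard' : S.card = k := by rw [hScard, hAcard]; omega
  -- x ∈ A, so x = y j
  obtain ⟨j, _, rfl⟩ := Finset.mem_image.mp (hSA hxS)
  by_cases hmem : y j ∈ Finset.image y B
  · obtain ⟨j', hj', hjj⟩ := Finset.mem_image.mp hmem
    have := (Finset.mem_filter.mp hj').2.1
    exact ⟨j', this, hjj.symm⟩
  · -- there is z in image B not in S
    have hnotsub : ¬ Finset.image y B ⊆ S := by
      intro hsub
      have : (Finset.image y B).card < S.card :=
        Finset.card_lt_card ⟨hsub, fun h => hmem (h hxS)⟩
      omega
    obtain ⟨z, hzB, hzS⟩ := Finset.not_subset.mp hnotsub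
    obtain ⟨j', hj', rfl⟩ := Finset.mem_image.mp hzB
    have hj'θ := (Finset.mem_filter.mp hj').2.2
    have hzA : y j' ∈ A \ S := Finset.mem_sdiff.mpr ⟨hBA hzB, hzS⟩
    have hle := hStop (y j) hxS (y j') hzA
    have hθx : θ ≤ lookahead s d (y j) := le_trans hj'θ hle
    refine ⟨j, ?_, rfl⟩
    by_contra hji
    push_neg at hji
    have : lookahead s d (y j) ≤ s (y i) :=
      le_trans (hlook (y j)) (hsort i j hji)
    linarith
end

section
/- Proposition 2 (guarantees of Lookbehind Heuristic Beam Search): let y¹, …, y^k be pairwise distinct hypotheses, all of the same length, sorted in descending order of score, s(y¹) ≥ … ≥ s(y^k). For 1 ≤ i ≤ k let C_i = {y^j ++ [v] : 1 ≤ j ≤ i, v ∈ V} be the set of one-token extensions of the first i hypotheses, and define z₁, …, z_k recursively by letting z_i be a maximizer of s over C_i \ {z₁, …, z_{i−1}}. Then for each 1 ≤ i ≤ k: (1) z_i is a one-token extension of some y^j with j ≤ i, i.e., its parent is among the i highest-scoring hypotheses y¹, …, y^i; and (2) at most i − 1 elements of C_i have score strictly greater than s(z_i), i.e., z_i attains at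 least the i-th highest score in C_i. -/
open scoped Classical

/-- Guarantees of Lookbehind Heuristic Beam Search: let `y 0, …, y (k-1)` be
pairwise distinct hypotheses of equal length sorted in descending order of
score, let `C i` be the one-token extensions of the first `i + 1` hypotheses,
and let `z i` be chosen as a maximizer of `s` over `C i` minus the previously
chosen elements. Then (1) `z i` extends some `y j` with `j ≤ i`, and (2) at
most `i` elements of `C i` have score strictly greater than `s (z i)`
(0-based indexing: `z i` attains at least the `(i+1)`-th highest score in
`C i`). -/
theorem lookbehind_heuristic_beam_search_guarantees
    {V : Type*} [Fintype V] [Nonempty V] [DecidableEq V]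
    (ℓ : List V → V → ℝ) (s : List V → ℝ)
    (hs0 : s [] = 0) (hrec : ∀ (y : List V) (v : V), s (y ++ [v]) = s y + ℓ y v)
    (k : ℕ) (y : Fin k → List V) (hinj : Function.Injective y)
    (hlen : ∀ i j : Fin k, (y i).length = (y j).length)
    (hsort : ∀ i j : Fin k, i ≤ j → s (y j) ≤ s (y i))
    (C : Fin k → Finset (List V))
    (hC : ∀ i : Fin k, C i =
      Finset.image (fun p : Fin k × V => y p.1 ++ [p.2])
        ((Finset.univ.filter (fun j => j ≤ i)) ×ˢ (Finset.univ : Finset V)))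
    (z : Fin k → List V)
    (hz : ∀ i : Fin k,
      z i ∈ C i \ Finset.image z (Finset.univ.filter (fun j => j < i)) ∧
      ∀ w ∈ C i \ Finset.image z (Finset.univ.filter (fun j => j < i)),
        s w ≤ s (z i)) :
    ∀ i : Fin k,
      (∃ j : Fin k, j ≤ i ∧ ∃ v : V, z i = y j ++ [v]) ∧
      ((C i).filter (fun w => s (z i) < s w)).card ≤ (i : ℕ) := by
  intro i
  obtain ⟨hzi, hmax⟩ := hz i
  rw [Finset.mem_sdiff] at hzi
  obtain ⟨hziC, hznot⟩ := hzi
  constructor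
  · rw [hC i] at hziC
    simp only [Finset.mem_image, Finset.mem_product, Finset.mem_filter,
      Finset.mem_univ, true_and] at hziC
    obtain ⟨p, ⟨hp1, _⟩, hp⟩ := hziC
    exact ⟨p.1, hp1, p.2, hp.symm⟩
  · have hsub : (C i).filter (fun w => s (z i) < s w) ⊆
        Finset.image z (Finset.univ.filter (fun j => j < i)) := by
      intro w hw
      rw [Finset.mem_filter] at hw
      by_contra hwi
      have := hmax w (Finset.mem_sdiff.mpr ⟨hw.1, hwi⟩)
      linarith [hw.2]
    calc ((C i).filter (fun w => s (z i) < s w)).card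
        ≤ (Finset.image z (Finset.univ.filter (fun j => j < i))).card :=
          Finset.card_le_card hsub
      _ ≤ (Finset.univ.filter (fun j => j < i)).card := Finset.card_image_le
      _ = (i : ℕ) := by
          have : Finset.univ.filter (fun j => j < i) = Finset.Iio i := by
            ext j; simp
          rw [this, Fin.card_Iio]
end
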